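/- arXiv:math/0409013 — 4 statements merged into one kernel-verified Lean document; each statement's English description precedes it below -/
import Mathlib

section
/- MacMahon's box formula: for positive integers a, b, c, the triple product ∏_{i=1}^{a} ∏_{j=1}^{b} ∏_{k=1}^{c} (i+j+k-1)/(i+j+k-2) equals ∏_{n=0}^{a-1} n!(b+c+n)! / ((b+n)!(c+n)!). -/
open Finset Nat

/-! In the innermost product over `k` the factors telescope: with `m = i + j`,
`∏ k ≤ c, (m + k - 1) / (m + k - 2) = (m + c - 1) / (m - 1)`. For `i = n + 1` the product
over `j` of `(n + c + j) / (n + j)` is then a quotient of two rising factorials, which is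
`(n + b + c)! n! / ((n + c)! (n + b)!)`. -/

section
variable {K : Type*} [Field K]

lemma prod_Icc_div_sub_one_telescope (x : K) (hx : ∀ k : ℕ, x + k ≠ 0) (c : ℕ) :
    ∏ k ∈ Icc 1 c, (x + k) / (x + k - 1) = (x + c) / x := by
  induction c with
  | zero => simp [div_self (by simpa using hx 0 : x ≠ 0)]
  | succ c ih =>
    rw [prod_Icc_succ_top (by omega), ih, Nat.cast_succ, ← add_assoc, add_sub_cancel_right,
      mul_comm, div_mul_div_cancel₀ (hx c)]

variable [CharZero K]

lemma prod_Icc_cast_add_eq_factorial_div (x b : ℕ) :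
    ∏ j ∈ Icc 1 b, ((x : K) + j) = (x + b)! / x ! := by
  rw [eq_div_iff (Nat.cast_ne_zero.mpr (factorial_ne_zero x)), ← factorial_mul_ascFactorial,
    ascFactorial_eq_prod_range, ← Ico_add_one_right_eq_Icc, prod_Ico_eq_prod_range, add_tsub_cancel_right]
  push_cast
  rw [mul_comm]
  congr! 2 with i
  ring

lemma prod_Icc_prod_Icc_box_layer (n b c : ℕ) :
    ∏ j ∈ Icc 1 b, ∏ k ∈ Icc 1 c,
      (((n + 1 + j + k : ℕ) : K) - 1) / (((n + 1 + j + k : ℕ) : K) - 2)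
    = (n ! * (b + c + n)! : K) / ((b + n)! * (c + n)!) := by
  have telescoped : ∀ j ∈ Icc 1 b, ∏ k ∈ Icc 1 c,
      (((n + 1 + j + k : ℕ) : K) - 1) / (((n + 1 + j + k : ℕ) : K) - 2)
      = ((n + c : ℕ) + j : K) / (n + j) := by
    intro j hj
    have hne : ∀ k : ℕ, ((n + j : ℕ) : K) + k ≠ 0 := fun k => by
      norm_cast; have := (mem_Icc.mp hj).1; omega
    rw [show ((n + c : ℕ) + j : K) / (n + j) = (((n + j : ℕ) : K) + c) / (n + j : ℕ) by
      push_cast; ring, ← prod_Icc_div_sub_one_telescope _ hne c]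
    refine prod_congr rfl fun k _ => ?_
    push_cast
    ring
  rw [prod_congr rfl telescoped, prod_div_distrib, prod_Icc_cast_add_eq_factorial_div,
    prod_Icc_cast_add_eq_factorial_div, show n + c + b = b + c + n by ring, add_comm n b, add_comm n c]
  field_simp

end

theorem macmahon_box_formula_general (a b c : ℕ) :
    ∏ i ∈ Finset.Icc 1 a, ∏ j ∈ Finset.Icc 1 b, ∏ k ∈ Finset.Icc 1 c,
      (((i + j + k : ℕ) : ℚ) - 1) / (((i + j + k : ℕ) : ℚ) - 2)
    = ∏ n ∈ Finset.range a,
        ((Nat.factorial n : ℚ) * (Nat.factorial (b + c + n) : ℚ)) /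
          ((Nat.factorial (b + n) : ℚ) * (Nat.factorial (c + n) : ℚ)) := by
  rw [← Ico_add_one_right_eq_Icc, prod_Ico_eq_prod_range, add_tsub_cancel_right]
  refine prod_congr rfl fun n _ => ?_
  rw [add_comm 1 n]
  exact prod_Icc_prod_Icc_box_layer n b c

/-- MacMahon's box formula. -/
theorem macmahon_box_formula (a b c : ℕ) (ha : 0 < a) (hb : 0 < b) (hc : 0 < c) :
    ∏ i ∈ Finset.Icc 1 a, ∏ j ∈ Finset.Icc 1 b, ∏ k ∈ Finset.Icc 1 c,
      (((i + j + k : ℕ) : ℚ) - 1) / (((i + j + k : ℕ) : ℚ) - 2)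
    = ∏ n ∈ Finset.range a,
        ((Nat.factorial n : ℚ) * (Nat.factorial (b + c + n) : ℚ)) /
          ((Nat.factorial (b + n) : ℚ) * (Nat.factorial (c + n) : ℚ)) :=
  macmahon_box_formula_general a b c
end

section
/- Gaussian integral identity for Hermite polynomials: for real α with |α| < 1 and real y, ∫_ℝ e^{-(x-y)²} H_n(αx) dx = √π (1-α²)^{n/2} H_n(αy/√(1-α²)). -/
open Finset

/-- The physicists' Hermite polynomial `H_n(x)`, given by its explicit sum. -/
noncomputable def hermiteH (n : ℕ) (x : ℝ) : ℝ :=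
  ∑ m ∈ Finset.range (n / 2 + 1),
    (-1 : ℝ) ^ m * (Nat.factorial n : ℝ) /
      ((Nat.factorial m : ℝ) * (Nat.factorial (n - 2 * m) : ℝ)) * (2 * x) ^ (n - 2 * m)

/-!
Write `I n` for the left-hand side. The recurrence `H (n+2) t = 2 t H (n+1) t - 2 (n+1) H n t`,
the derivative rule `H (n+1)' = 2 (n+1) H n`, and Gaussian integration by parts
`∫ (x - y) e^{-(x-y)²} p x dx = ½ ∫ e^{-(x-y)²} p' x dx` for polynomials `p` give
`I (n+2) = 2 α y I (n+1) - 2 (n+1) (1 - α²) I n`. With `β = √(1 - α²)` this is exactly the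
recurrence satisfied by `√π β^n H n (α y / β)`, and the cases `n = 0, 1` reduce to the Gaussian
integral `∫ e^{-(x-y)²} dx = √π`.
-/

open MeasureTheory Polynomial

theorem integrable_eval_mul_exp_neg_sq (p : ℝ[X]) :
    Integrable fun x => p.eval x * Real.exp (-x ^ 2) := by
  induction p using Polynomial.induction_on' with
  | add p q hp hq =>
    simp only [eval_add, add_mul]
    exact hp.add hq
  | monomial k a =>
    have h := integrable_rpow_mul_exp_neg_mul_sq one_pos (s := k)
      (by linarith [k.cast_nonneg' (α := ℝ)])
    simpa [mul_assoc] using h.const_mul a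

theorem integrable_exp_neg_sq_sub_mul_eval (y : ℝ) (p : ℝ[X]) :
    Integrable fun x => Real.exp (-(x - y) ^ 2) * p.eval x := by
  convert (integrable_eval_mul_exp_neg_sq (p.comp (X + C y))).comp_sub_right y using 2 with x
  simp [mul_comm]

noncomputable def gaussianPairing (y : ℝ) : ℝ[X] →ₗ[ℝ] ℝ where
  toFun p := ∫ x, Real.exp (-(x - y) ^ 2) * p.eval x
  map_add' p q := by
    simp only [eval_add, mul_add]
    exact integral_add (integrable_exp_neg_sq_sub_mul_eval y p)
      (integrable_exp_neg_sq_sub_mul_eval y q)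
  map_smul' a p := by
    simp only [eval_smul, smul_eq_mul, RingHom.id_apply, mul_left_comm _ a]
    exact integral_const_mul a _

section gaussianPairing

variable (y : ℝ)

theorem gaussianPairing_apply (p : ℝ[X]) :
    gaussianPairing y p = ∫ x, Real.exp (-(x - y) ^ 2) * p.eval x := rfl

theorem gaussianPairing_C_mul (a : ℝ) (p : ℝ[X]) :
    gaussianPairing y (C a * p) = a * gaussianPairing y p := by
  rw [C_mul', map_smul, smul_eq_mul]

theorem gaussianPairing_one : gaussianPairing y 1 = Real.sqrt Real.pi := by
  have h := integral_sub_right_eq_self (μ := volume) (fun x : ℝ => Real.exp (-x ^ 2)) y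
  simp only [gaussianPairing_apply, eval_one, mul_one, h]
  simpa using integral_gaussian 1

theorem gaussianPairing_derivative_sub_eq_zero (p : ℝ[X]) :
    gaussianPairing y (derivative p - 2 * (X - C y) * p) = 0 := by
  refine integral_eq_zero_of_hasDerivAt_of_integrable (fun x => ?_)
    (integrable_exp_neg_sq_sub_mul_eval y _) (integrable_exp_neg_sq_sub_mul_eval y p)
  have hexp : HasDerivAt (fun x => Real.exp (-(x - y) ^ 2))
      (Real.exp (-(x - y) ^ 2) * -(2 * (x - y))) x := by
    simpa using (((hasDerivAt_id x).sub_const y).pow 2).neg.exp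
  refine (hexp.fun_mul (p.hasDerivAt x)).congr_deriv ?_
  simp only [eval_sub, eval_mul, eval_ofNat, eval_X, eval_C]
  ring

theorem gaussianPairing_X_mul (p : ℝ[X]) :
    gaussianPairing y (X * p) =
      y * gaussianPairing y p + gaussianPairing y (derivative p) / 2 := by
  have h := gaussianPairing_derivative_sub_eq_zero y p
  rw [show derivative p - 2 * (X - C y) * p = derivative p - C 2 * (X * p) + C (2 * y) * p by
    simp only [C_mul, C_ofNat]; ring, map_add, map_sub, gaussianPairing_C_mul,
    gaussianPairing_C_mul] at h
  linarith

end gaussianPairing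

section hermitePoly

open Nat

noncomputable def hermiteCoeff (n m : ℕ) : ℝ :=
  (-1) ^ m * n ! * 2 ^ (n - 2 * m) / (m ! * (n - 2 * m) !)

noncomputable def hermitePoly (n : ℕ) : ℝ[X] :=
  ∑ m ∈ range (n / 2 + 1), C (hermiteCoeff n m) * X ^ (n - 2 * m)

theorem eval_hermitePoly (n : ℕ) (x : ℝ) : (hermitePoly n).eval x = hermiteH n x := by
  simp only [hermitePoly, hermiteH, hermiteCoeff, eval_finsetSum, eval_mul, eval_C, eval_pow,
    eval_X, mul_pow]
  refine sum_congr rfl fun m _ => ?_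
  ring

theorem hermitePoly_zero : hermitePoly 0 = 1 := by
  simp [hermitePoly, hermiteCoeff]

theorem hermitePoly_one : hermitePoly 1 = C 2 * X := by
  simp [hermitePoly, hermiteCoeff]

theorem hermiteCoeff_zero_right (n : ℕ) : hermiteCoeff n 0 = 2 ^ n := by
  simp [hermiteCoeff, factorial_ne_zero]

theorem hermiteCoeff_succ_mul {n m : ℕ} (h : 2 * m ≤ n) :
    hermiteCoeff (n + 1) m * (n + 1 - 2 * m : ℕ) = 2 * (n + 1) * hermiteCoeff n m := by
  obtain ⟨k, rfl⟩ : ∃ k, n = k + 2 * m := ⟨n - 2 * m, by omega⟩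
  simp only [hermiteCoeff, show k + 2 * m + 1 - 2 * m = k + 1 by omega,
    show k + 2 * m - 2 * m = k by omega, factorial_succ]
  push_cast
  field_simp
  ring

theorem hermiteCoeff_add_two {n m : ℕ} (h : 2 * m < n) :
    hermiteCoeff (n + 2) (m + 1) =
      2 * hermiteCoeff (n + 1) (m + 1) - 2 * (n + 1) * hermiteCoeff n m := by
  obtain ⟨k, rfl⟩ : ∃ k, n = k + 2 * m + 1 := ⟨n - 2 * m - 1, by omega⟩
  simp only [hermiteCoeff, show k + 2 * m + 1 + 2 - 2 * (m + 1) = k + 1 by omega,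
    show k + 2 * m + 1 + 1 - 2 * (m + 1) = k by omega,
    show k + 2 * m + 1 - 2 * m = k + 1 by omega, factorial_succ]
  push_cast
  field_simp
  ring

theorem hermiteCoeff_add_two_self (m : ℕ) :
    hermiteCoeff (2 * m + 2) (m + 1) = -(2 * (2 * m + 1)) * hermiteCoeff (2 * m) m := by
  simp only [hermiteCoeff, show 2 * m + 2 - 2 * (m + 1) = 0 by omega, Nat.sub_self,
    show 2 * m + 2 = 2 * m + 1 + 1 by ring, factorial_succ]
  push_cast
  field_simp
  ring

theorem derivative_hermitePoly_succ (n : ℕ) :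
    derivative (hermitePoly (n + 1)) = C (2 * ((n : ℝ) + 1)) * hermitePoly n := by
  simp only [hermitePoly, derivative_sum, derivative_C_mul_X_pow, mul_sum]
  have hsub : range (n / 2 + 1) ⊆ range ((n + 1) / 2 + 1) := range_subset_range.2 (by omega)
  rw [← sum_subset hsub]
  · refine sum_congr rfl fun m hm => ?_
    have h2m : 2 * m ≤ n := by rw [mem_range] at hm; omega
    rw [show n + 1 - 2 * m - 1 = n - 2 * m by omega, hermiteCoeff_succ_mul h2m, ← mul_assoc,
      ← C_mul]
  · intro m hm hm'
    rw [mem_range] at hm hm'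
    rw [show n + 1 - 2 * m = 0 by omega]
    simp

theorem hermitePoly_add_two (n : ℕ) :
    hermitePoly (n + 2) =
      C 2 * X * hermitePoly (n + 1) - C (2 * ((n : ℝ) + 1)) * hermitePoly n := by
  simp only [hermitePoly]
  rw [show (n + 2) / 2 = n / 2 + 1 by omega, sum_range_succ' _ (n / 2 + 1),
    sum_range_succ' _ ((n + 1) / 2), mul_add, mul_sum, mul_sum]
  set T := fun m => C (hermiteCoeff (n + 2) (m + 1)) * X ^ (n + 2 - 2 * (m + 1))
  set A := fun m => C 2 * X * (C (hermiteCoeff (n + 1) (m + 1)) * X ^ (n + 1 - 2 * (m + 1)))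
  set B := fun m => C (2 * ((n : ℝ) + 1)) * (C (hermiteCoeff n m) * X ^ (n - 2 * m))
  have hinner : ∀ m ∈ range ((n + 1) / 2), A m = T m + B m := by
    intro m hm
    rw [mem_range] at hm
    simp only [A, T, B, hermiteCoeff_add_two (show 2 * m < n by omega),
      show n + 2 - 2 * (m + 1) = n + 1 - 2 * (m + 1) + 1 by omega,
      show n - 2 * m = n + 1 - 2 * (m + 1) + 1 by omega, C_sub, C_mul]
    ring
  -- for even `n` the top term of `H (n+2)` has no counterpart in `X * H (n+1)`
  have htop : ∀ m ∈ range (n / 2 + 1), m ∉ range ((n + 1) / 2) → T m + B m = 0 := by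
    intro m hm hm'
    rw [mem_range] at hm hm'
    obtain rfl : n = 2 * m := by omega
    simp only [T, B, hermiteCoeff_add_two_self, Nat.sub_self,
      show 2 * m + 2 - 2 * (m + 1) = 0 by omega]
    push_cast
    simp only [C_mul, C_neg]
    ring
  have hsum : ∑ m ∈ range ((n + 1) / 2), A m =
      ∑ m ∈ range (n / 2 + 1), T m + ∑ m ∈ range (n / 2 + 1), B m := by
    rw [sum_congr rfl hinner, sum_subset (range_subset_range.2 (by omega)) htop,
      sum_add_distrib]
  rw [hsum]
  simp only [hermiteCoeff_zero_right, Nat.sub_zero, mul_zero, pow_succ, C_mul]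
  ring

end hermitePoly

theorem gaussianPairing_hermitePoly_comp_add_two (y α : ℝ) (n : ℕ) :
    gaussianPairing y ((hermitePoly (n + 2)).comp (C α * X)) =
      2 * α * y * gaussianPairing y ((hermitePoly (n + 1)).comp (C α * X))
        - 2 * (n + 1) * (1 - α ^ 2) * gaussianPairing y ((hermitePoly n).comp (C α * X)) := by
  have hderiv : derivative ((hermitePoly (n + 1)).comp (C α * X)) =
      C (2 * (n + 1) * α) * (hermitePoly n).comp (C α * X) := by
    rw [derivative_comp, derivative_hermitePoly_succ, mul_comp, C_comp]
    simp only [derivative_C_mul_X, C_mul]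
    ring
  simp only [hermitePoly_add_two, sub_comp, mul_comp, C_comp, X_comp]
  rw [show C 2 * (C α * X) = C (2 * α) * X by rw [C_mul, mul_assoc], mul_assoc, map_sub,
    gaussianPairing_C_mul, gaussianPairing_C_mul, gaussianPairing_X_mul, hderiv,
    gaussianPairing_C_mul]
  ring

theorem gaussianPairing_hermitePoly_comp (y : ℝ) {α β : ℝ} (hβ : β ≠ 0)
    (hαβ : α ^ 2 + β ^ 2 = 1) (n : ℕ) :
    gaussianPairing y ((hermitePoly n).comp (C α * X)) =
      Real.sqrt Real.pi * β ^ n * (hermitePoly n).eval (α * y / β) := by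
  induction n using Nat.twoStepInduction with
  | zero => simp [hermitePoly_zero, gaussianPairing_one]
  | one =>
    have hcomp : (hermitePoly 1).comp (C α * X) = C (2 * α) * (X * 1) := by
      rw [hermitePoly_one, mul_comp, C_comp, X_comp, mul_one, C_mul, mul_assoc]
    rw [hcomp, gaussianPairing_C_mul, gaussianPairing_X_mul, derivative_one, map_zero,
      gaussianPairing_one, hermitePoly_one]
    simp only [eval_mul, eval_C, eval_X]
    field_simp
    ring
  | more n ih₀ ih₁ =>
    rw [gaussianPairing_hermitePoly_comp_add_two, ih₀, ih₁, hermitePoly_add_two]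
    simp only [eval_sub, eval_mul, eval_C, eval_X]
    rw [show 1 - α ^ 2 = β ^ 2 by linarith]
    field_simp
    ring

/-- Gaussian integral identity for Hermite polynomials:
`∫ e^{-(x-y)²} H_n(αx) dx = √π (1-α²)^{n/2} H_n(αy/√(1-α²))`. -/
theorem hermite_gaussian_integral (α y : ℝ) (hα : |α| < 1) (n : ℕ) :
    ∫ x : ℝ, Real.exp (-(x - y) ^ 2) * hermiteH n (α * x)
      = Real.sqrt Real.pi * (Real.sqrt (1 - α ^ 2)) ^ n *
          hermiteH n (α * y / Real.sqrt (1 - α ^ 2)) := by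
  have hpos : 0 < 1 - α ^ 2 := by
    rw [sub_pos, sq_lt_one_iff_abs_lt_one]
    exact hα
  have h := gaussianPairing_hermitePoly_comp y (α := α) (Real.sqrt_pos.2 hpos).ne'
    (by rw [Real.sq_sqrt hpos.le]; ring) n
  simpa only [gaussianPairing_apply, eval_comp, eval_mul, eval_C, eval_X, eval_hermitePoly]
    using h
end

section
/- Lindström–Gessel–Viennot for non-intersecting simple walks: the number of families of a non-intersecting simple symmetric lattice paths on ℤ from (0, 2j), 0 ≤ j ≤ a−1, to (b+c, c−b+2j), 0 ≤ j ≤ a−1, equals det(C(b+c, (c−b+2(k−j)+b+c)/2))_{j,k=0}^{a−1} = det(C(b+c, c+k−j))_{j,k=0}^{a−1}. -/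
/-!
Walks with steps `±1` starting at points of the same parity stay of equal parity, so two of them
can only change order by meeting. Expand the determinant of `walkCount n (y k - x j)` by
multilinearity in the rows, along `walkCount (n+1) d = walkCount n (d+1) + walkCount n (d-1)`:
this gives one determinant per choice of first steps. If two of the new starting points coincide,
that determinant has two equal rows and no nonintersecting family starts with these steps;
otherwise the new starting points are again increasing with gaps at least `2` and induction on
the length applies. For walks of length `0` only the identity permutation contributes, since
both ends are increasing.
-/

open Finset

def chooseZ (n : ℕ) (k : ℤ) : ℕ :=
  if 0 ≤ k ∧ k ≤ (n : ℤ) then n.choose k.toNat else 0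

theorem chooseZ_eq_ite (n : ℕ) (k : ℤ) : chooseZ n k = if 0 ≤ k then n.choose k.toNat else 0 := by
  unfold chooseZ
  by_cases hk : k ≤ n
  · simp only [hk, and_true]
  · rw [if_neg (by omega)]
    split_ifs
    exacts [(Nat.choose_eq_zero_of_lt (by omega)).symm, rfl]

theorem chooseZ_succ (n : ℕ) (k : ℤ) :
    chooseZ (n + 1) k = chooseZ n k + chooseZ n (k - 1) := by
  rcases lt_trichotomy k 0 with hk | rfl | hk
  · rw [chooseZ_eq_ite, chooseZ_eq_ite, chooseZ_eq_ite, if_neg (by omega), if_neg (by omega),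
      if_neg (by omega)]
  · simp [chooseZ_eq_ite]
  · obtain ⟨m, rfl⟩ : ∃ m : ℕ, k = m + 1 := ⟨k.toNat - 1, by omega⟩
    simp only [chooseZ_eq_ite, if_pos (by omega : (0 : ℤ) ≤ m + 1), add_sub_cancel_right,
      if_pos (by omega : (0 : ℤ) ≤ m), show ((m : ℤ) + 1).toNat = m + 1 by omega, Int.toNat_natCast,
      Nat.choose_succ_succ', add_comm]

/-- The number of walks of length `n` with steps `±1` and total displacement `d`. -/
def walkCount : ℕ → ℤ → ℕ
  | 0, d => if d = 0 then 1 else 0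
  | n + 1, d => walkCount n (d + 1) + walkCount n (d - 1)

theorem walkCount_two_mul_sub (n : ℕ) (m : ℤ) : walkCount n (2 * m - n) = chooseZ n m := by
  induction n generalizing m with
  | zero =>
    rcases eq_or_ne m 0 with rfl | hm
    · rfl
    · simp only [walkCount, chooseZ, Nat.cast_zero, sub_zero]
      rw [if_neg (by omega), if_neg (by omega)]
  | succ n ih =>
    rw [walkCount, chooseZ_succ, ← ih, ← ih]
    congr 2 <;> push_cast <;> ring

section Families

variable {a n : ℕ}

def IsNonintersectingFamily (n : ℕ) (x y : Fin a → ℤ) (p : Fin a → Fin (n + 1) → ℤ) : Prop :=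
  (∀ j, p j 0 = x j) ∧ (∀ j, p j (Fin.last n) = y j) ∧
  (∀ j (t : Fin n), p j t.succ - p j t.castSucc = 1 ∨ p j t.succ - p j t.castSucc = -1) ∧
  (∀ (t : Fin (n + 1)) (j k : Fin a), j ≠ k → p j t ≠ p k t)

-- A walk is determined by its start and its sequence of step directions.
instance (n : ℕ) (x y : Fin a → ℤ) :
    Finite {p : Fin a → Fin (n + 1) → ℤ // IsNonintersectingFamily n x y p} := by
  refine Finite.of_injective
    (fun p j (t : Fin n) => decide (p.1 j t.succ - p.1 j t.castSucc = 1)) fun p q h => ?_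
  refine Subtype.ext (funext fun j => funext fun t => ?_)
  induction t using Fin.induction with
  | zero => rw [p.2.1, q.2.1]
  | succ t ih =>
    have hp := p.2.2.2.1 j t
    have hq := q.2.2.2.1 j t
    have hdir := congrFun (congrFun h j) t
    simp only [decide_eq_decide] at hdir
    omega

theorem card_nonintersectingFamily_zero {x y : Fin a → ℤ} (hx : x.Injective) :
    Nat.card {p : Fin a → Fin 1 → ℤ // IsNonintersectingFamily 0 x y p} =
      if x = y then 1 else 0 := by
  split_ifs with hxy
  · subst hxy
    refine Nat.card_eq_one_iff_unique.2 ⟨⟨fun p q => ?_⟩, ⟨⟨fun j _ => x j, fun _ => rfl,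
      fun _ => rfl, fun _ => Fin.elim0, fun _ _ _ hjk => hx.ne hjk⟩⟩⟩
    refine Subtype.ext (funext fun j => funext fun t => ?_)
    rw [Subsingleton.elim t 0, p.2.1, q.2.1]
  · refine Nat.card_eq_zero.2 (Or.inl ⟨fun p => hxy (funext fun j => ?_)⟩)
    rw [← p.2.1 j, ← p.2.2.1 j]
    rfl

theorem card_nonintersectingFamily_eq_zero {x y : Fin a → ℤ} (hx : ¬ x.Injective) :
    Nat.card {p : Fin a → Fin (n + 1) → ℤ // IsNonintersectingFamily n x y p} = 0 := by
  obtain ⟨j, k, hxjk, hjk⟩ := Function.not_injective_iff.1 hx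
  refine Nat.card_eq_zero.2 (Or.inl ⟨fun p => p.2.2.2.2 0 j k hjk ?_⟩)
  rw [p.2.1, p.2.1, hxjk]

def afterStep (x : Fin a → ℤ) (v : Fin a → Bool) : Fin a → ℤ :=
  fun j => x j + if v j then 1 else -1

theorem afterStep_sub (x : Fin a → ℤ) (v : Fin a → Bool) (j : Fin a) :
    afterStep x v j - x j = 1 ∨ afterStep x v j - x j = -1 := by
  unfold afterStep
  split_ifs <;> simp

theorem afterStep_strictMono {x : Fin a → ℤ} (hx : StrictMono x) (hpar : ∀ j k, 2 ∣ x j - x k)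
    {v : Fin a → Bool} (hv : (afterStep x v).Injective) : StrictMono (afterStep x v) := by
  intro j k hjk
  have := hx hjk
  have := hpar j k
  have := afterStep_sub x v j
  have := afterStep_sub x v k
  have := hv.ne hjk.ne
  omega

theorem two_dvd_afterStep_sub {x : Fin a → ℤ} (hpar : ∀ j k, 2 ∣ x j - x k) (v : Fin a → Bool)
    (j k : Fin a) :
    2 ∣ afterStep x v j - afterStep x v k := by
  have := hpar j k
  have := afterStep_sub x v j
  have := afterStep_sub x v k
  omega

def firstStep (x : Fin a → ℤ) (p : Fin a → Fin (n + 2) → ℤ) : Fin a → Bool :=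
  fun j => decide (p j 1 = x j + 1)

namespace IsNonintersectingFamily

variable {x y : Fin a → ℤ}

theorem tail {p : Fin a → Fin (n + 2) → ℤ} (h : IsNonintersectingFamily (n + 1) x y p) :
    IsNonintersectingFamily n (afterStep x (firstStep x p)) y fun j => Fin.tail (p j) := by
  obtain ⟨hstart, hend, hstep, hdisj⟩ := h
  refine ⟨fun j => ?_, fun j => hend j, fun j t => hstep j t.succ, fun t => hdisj t.succ⟩
  have := hstep j 0
  simp only [Fin.succ_zero_eq_one, Fin.castSucc_zero, hstart] at this
  simp only [Fin.tail, afterStep, firstStep, Fin.succ_zero_eq_one, decide_eq_true_eq]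
  split_ifs <;> omega

theorem cons (hx : x.Injective) {v : Fin a → Bool} {q : Fin a → Fin (n + 1) → ℤ}
    (h : IsNonintersectingFamily n (afterStep x v) y q) :
    IsNonintersectingFamily (n + 1) x y fun j => Fin.cons (x j) (q j) := by
  obtain ⟨hstart, hend, hstep, hdisj⟩ := h
  refine ⟨fun j => rfl, fun j => hend j, fun j t => ?_, fun t j k hjk => ?_⟩
  · cases t using Fin.cases with
    | zero => simpa [hstart] using afterStep_sub x v j
    | succ t => simpa [← Fin.succ_castSucc] using hstep j t
  · cases t using Fin.cases with
    | zero => exact hx.ne hjk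
    | succ t => exact hdisj t j k hjk

end IsNonintersectingFamily

theorem firstStep_cons (x : Fin a → ℤ) (v : Fin a → Bool) {q : Fin a → Fin (n + 1) → ℤ}
    (hq : ∀ j, q j 0 = afterStep x v j) : firstStep x (fun j => Fin.cons (x j) (q j)) = v := by
  funext j
  change decide (q j 0 = x j + 1) = v j
  rw [hq j, afterStep]
  cases v j <;> simp

def firstStepFiberEquiv {x : Fin a → ℤ} (hx : x.Injective) (y : Fin a → ℤ) (v : Fin a → Bool) :
    {p : {p : Fin a → Fin (n + 2) → ℤ // IsNonintersectingFamily (n + 1) x y p} //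
        firstStep x p.1 = v} ≃
      {q : Fin a → Fin (n + 1) → ℤ // IsNonintersectingFamily n (afterStep x v) y q} where
  toFun p := ⟨fun j => Fin.tail (p.1.1 j), by obtain ⟨⟨p, hp⟩, rfl⟩ := p; exact hp.tail⟩
  invFun q := ⟨⟨fun j => Fin.cons (x j) (q.1 j), q.2.cons hx⟩, firstStep_cons x v q.2.1⟩
  left_inv p := by
    ext j t : 4
    simp [← p.1.2.1 j]
  right_inv q := rfl

theorem card_nonintersectingFamily_succ {x : Fin a → ℤ} (hx : x.Injective) (y : Fin a → ℤ) :
    Nat.card {p : Fin a → Fin (n + 2) → ℤ // IsNonintersectingFamily (n + 1) x y p} =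
      ∑ v : Fin a → Bool, Nat.card {q // IsNonintersectingFamily n (afterStep x v) y q} := by
  rw [← Nat.card_congr (Equiv.sigmaFiberEquiv fun p : {p // _} => firstStep x p.1), Nat.card_sigma]
  exact sum_congr rfl fun v _ => Nat.card_congr (firstStepFiberEquiv hx y v)

end Families

namespace Matrix

variable {R m ι : Type*} [CommRing R] [Fintype m] [DecidableEq m] [Fintype ι]

theorem det_of_sum_rows (f : m → ι → m → R) :
    (of fun j k => ∑ i, f j i k).det = ∑ r : m → ι, (of fun j k => f j (r j) k).det := by
  have hrows : (of fun j k => ∑ i, f j i k) = fun j => ∑ i, f j i := by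
    ext j k
    simp
  rw [hrows]
  exact (detRowAlternating (R := R) (n := m)).toMultilinearMap.map_sum f

theorem det_of_ite_eq [LinearOrder m] {α : Type*} [LinearOrder α] {x y : m → α}
    (hx : StrictMono x) (hy : StrictMono y) :
    (of fun j k => if x j = y k then (1 : R) else 0).det = if x = y then 1 else 0 := by
  split_ifs with hxy
  · subst hxy
    convert det_one (R := R) (n := m)
    ext j k
    simp [one_apply, hx.injective.eq_iff]
  · rw [det_apply]
    refine sum_eq_zero fun σ _ => ?_
    obtain ⟨j, hj⟩ : ∃ j, x (σ j) ≠ y j := by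
      by_contra! h
      have hσ : StrictMono σ := fun j k hjk => hx.lt_iff_lt.1 (by simpa only [h] using hy hjk)
      exact hxy (funext fun j => by rw [← h j, hσ.apply_eq])
    rw [prod_eq_zero (mem_univ j) (by simp [hj]), smul_zero]

end Matrix

section Determinant

open Matrix

variable {R : Type*} [CommRing R] {a : ℕ}

theorem det_walkCount_succ (n : ℕ) (x y : Fin a → ℤ) :
    (of fun j k => (walkCount (n + 1) (y k - x j) : R)).det =
      ∑ v : Fin a → Bool, (of fun j k => (walkCount n (y k - afterStep x v j) : R)).det := by
  calc _ = (of fun j k => ∑ b : Bool,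
          (walkCount n (y k - (x j + if b then 1 else -1)) : R)).det := by
        congr 1
        ext j k
        simp only [of_apply, Fintype.sum_bool, walkCount, Nat.cast_add, if_true,
          Bool.false_eq_true, if_false]
        rw [add_comm]
        congr 3 <;> ring
    _ = _ := det_of_sum_rows _

theorem card_nonintersectingFamily_eq_det (n : ℕ) {x y : Fin a → ℤ} (hx : StrictMono x)
    (hpar : ∀ j k, 2 ∣ x j - x k) (hy : StrictMono y) :
    (Nat.card {p // IsNonintersectingFamily n x y p} : R) =
      (of fun j k => (walkCount n (y k - x j) : R)).det := by
  induction n generalizing x with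
  | zero =>
    have hentry : ∀ j k, (walkCount 0 (y k - x j) : R) = if x j = y k then 1 else 0 := by
      intro j k
      simp [walkCount, sub_eq_zero, eq_comm]
    simp only [card_nonintersectingFamily_zero hx.injective, hentry, det_of_ite_eq hx hy]
    push_cast
    rfl
  | succ n ih =>
    rw [card_nonintersectingFamily_succ hx.injective, det_walkCount_succ, Nat.cast_sum]
    refine sum_congr rfl fun v _ => ?_
    by_cases hv : (afterStep x v).Injective
    · exact ih (afterStep_strictMono hx hpar hv) (two_dvd_afterStep_sub hpar v)
    · obtain ⟨j, k, hjk, hne⟩ := Function.not_injective_iff.1 hv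
      rw [card_nonintersectingFamily_eq_zero hv, Nat.cast_zero,
        det_zero_of_row_eq hne (funext fun i => by simp [hjk])]

end Determinant

theorem lgv_nonintersecting_walks_general (a b c : ℕ) :
    (Nat.card {p : Fin a → Fin (b + c + 1) → ℤ //
        (∀ j : Fin a, p j 0 = 2 * (j : ℤ)) ∧
        (∀ j : Fin a, p j (Fin.last (b + c)) = (c : ℤ) - b + 2 * (j : ℤ)) ∧
        (∀ (j : Fin a) (t : Fin (b + c)),
          p j t.succ - p j t.castSucc = 1 ∨ p j t.succ - p j t.castSucc = -1) ∧
        (∀ (t : Fin (b + c + 1)) (j k : Fin a), j ≠ k → p j t ≠ p k t)} : ℝ)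
      = Matrix.det (Matrix.of fun j k : Fin a =>
          (chooseZ (b + c) ((c : ℤ) + (k : ℤ) - (j : ℤ)) : ℝ)) := by
  have hx : StrictMono fun j : Fin a => 2 * (j : ℤ) := fun j k hjk => by
    simp only; omega
  have hy : StrictMono fun j : Fin a => (c : ℤ) - b + 2 * (j : ℤ) := fun j k hjk => by
    simp only; omega
  refine (card_nonintersectingFamily_eq_det (b + c) hx (fun j k => ⟨j - k, by ring⟩) hy).trans ?_
  congr 2
  ext j k
  rw [← walkCount_two_mul_sub]
  congr 2
  push_cast
  ring

/-- Lindström–Gessel–Viennot for non-intersecting simple symmetric walks: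
the number of families of `a` non-intersecting simple symmetric lattice paths
from `(0, 2j)` to `(b+c, c-b+2j)`, `0 ≤ j ≤ a-1`, equals
`det(C(b+c, c+k-j))_{j,k=0}^{a-1}`. -/
theorem lgv_nonintersecting_walks (a b c : ℕ) (ha : 0 < a) (hb : 0 < b) (hc : 0 < c)
    (hbc : b ≤ c) :
    (Nat.card {p : Fin a → Fin (b + c + 1) → ℤ //
        (∀ j : Fin a, p j 0 = 2 * (j : ℤ)) ∧
        (∀ j : Fin a, p j (Fin.last (b + c)) = (c : ℤ) - b + 2 * (j : ℤ)) ∧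
        (∀ (j : Fin a) (t : Fin (b + c)),
          p j t.succ - p j t.castSucc = 1 ∨ p j t.succ - p j t.castSucc = -1) ∧
        (∀ (t : Fin (b + c + 1)) (j k : Fin a), j ≠ k → p j t ≠ p k t)} : ℝ)
      = Matrix.det (Matrix.of fun j k : Fin a =>
          (chooseZ (b + c) ((c : ℤ) + (k : ℤ) - (j : ℤ)) : ℝ)) :=
  lgv_nonintersecting_walks_general a b c
end

section
/- The determinant det(C(b+c, c+k−j))_{j,k=0}^{a−1} of binomial coefficients equals ∏_{n=0}^{a−1} n!(b+c+n)! / ((b+n)!(c+n)!). -/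
open Finset

/-!
Multiplying row `j` by `(b + j)! (c + a - 1 - j)!` turns the entry `C(b + c, c + k - j)` into
`(b + c)! p_k(j)`, where `p_k(x) = (x + b)_k (c + a - 1 - x)_{a - 1 - k}` is a product of two
falling factorials, a polynomial of degree `a - 1`. A matrix `(p_k(x_j))` of such evaluations is
a Vandermonde matrix times the coefficient matrix of the `p_k`, so its determinant is unchanged
when the nodes `x_j = j` are translated to `c + j`. At the translated nodes the matrix is upper
triangular, because `(a - 1 - m)_{a - 1 - k}` vanishes for `m > k`, and its diagonal yields the
product.
-/

open Polynomial Nat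

theorem Matrix.of_eval_eq_vandermonde_mul {R : Type*} [CommRing R] {n : ℕ} (v : Fin n → R)
    (p : Fin n → R[X]) (h_deg : ∀ j, (p j).natDegree < n) :
    Matrix.of (fun i j => (p j).eval (v i)) =
      Matrix.vandermonde v * Matrix.of (fun (i j : Fin n) => (p j).coeff i) := by
  ext i j
  rw [Matrix.of_apply, Matrix.mul_apply, eval_eq_sum_range' (h_deg j),
    ← Fin.sum_univ_eq_sum_range (fun k => (p j).coeff k * v i ^ k)]
  simp only [Matrix.vandermonde_apply, Matrix.of_apply, mul_comm]

theorem Matrix.det_of_eval_add {R : Type*} [CommRing R] {n : ℕ} (v : Fin n → R) (t : R)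
    (p : Fin n → R[X]) (h_deg : ∀ j, (p j).natDegree < n) :
    (Matrix.of fun i j => (p j).eval (v i + t)).det =
      (Matrix.of fun i j => (p j).eval (v i)).det := by
  rw [of_eval_eq_vandermonde_mul _ p h_deg, of_eval_eq_vandermonde_mul _ p h_deg, det_mul,
    det_mul, det_vandermonde_add]

theorem factorial_mul_factorial_mul_chooseZ {n P Q r s : ℕ} (h : P + Q = n + r + s) :
    P ! * Q ! * chooseZ n ((Q : ℤ) - s) = n ! * (P.descFactorial r * Q.descFactorial s) := by
  rcases lt_or_ge Q s with hQs | hsQ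
  · rw [chooseZ, if_neg (by omega), descFactorial_eq_zero_iff_lt.mpr hQs]; simp
  rcases lt_or_ge P r with hPr | hrP
  · rw [chooseZ, if_neg (by omega), descFactorial_eq_zero_iff_lt.mpr hPr]; simp
  rw [chooseZ, if_pos (by omega), show ((Q : ℤ) - s).toNat = Q - s by omega,
    ← factorial_mul_descFactorial hrP, ← factorial_mul_descFactorial hsQ,
    ← choose_mul_factorial_mul_factorial (show Q - s ≤ n by omega),
    show n - (Q - s) = P - r by omega]
  ring

noncomputable def binomialColumnPoly (a b c k : ℕ) : ℚ[X] :=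
  (descPochhammer ℚ k).comp (X + C (b : ℚ)) *
    (descPochhammer ℚ (a - 1 - k)).comp (C ((c + a - 1 : ℕ) : ℚ) - X)

theorem binomialColumnPoly_natDegree_lt {a b c k : ℕ} (hk : k < a) :
    (binomialColumnPoly a b c k).natDegree < a := by
  calc (binomialColumnPoly a b c k).natDegree
      ≤ k * 1 + (a - 1 - k) * 1 := by
        refine natDegree_mul_le.trans_eq ?_
        rw [natDegree_comp, natDegree_comp, descPochhammer_natDegree, descPochhammer_natDegree,
          natDegree_X_add_C, natDegree_sub_eq_right_of_natDegree_lt] <;> simp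
    _ < a := by omega

theorem binomialColumnPoly_eval_natCast {a b c k x : ℕ} (hx : x ≤ c + a - 1) :
    (binomialColumnPoly a b c k).eval (x : ℚ) =
      ((b + x).descFactorial k * (c + a - 1 - x).descFactorial (a - 1 - k) : ℕ) := by
  rw [binomialColumnPoly, eval_mul, eval_comp, eval_comp, eval_add, eval_sub, eval_X, eval_C,
    eval_C, ← Nat.cast_sub hx, add_comm (x : ℚ), ← Nat.cast_add,
    descPochhammer_eval_eq_descFactorial, descPochhammer_eval_eq_descFactorial, Nat.cast_mul]

theorem factorial_mul_factorial_mul_chooseZ_eq_binomialColumnPoly_eval {a b c j k : ℕ}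
    (hj : j < a) (hk : k < a) :
    (((b + j)! * (c + (a - 1 - j))! : ℕ) : ℚ) * chooseZ (b + c) ((c : ℤ) + k - j) =
      (b + c)! * (binomialColumnPoly a b c k).eval (j : ℚ) := by
  have key := factorial_mul_factorial_mul_chooseZ (n := b + c) (P := b + j)
    (Q := c + (a - 1 - j)) (r := k) (s := a - 1 - k) (by omega)
  rw [show ((c + (a - 1 - j) : ℕ) : ℤ) - (a - 1 - k : ℕ) = c + k - j by omega] at key
  rw [binomialColumnPoly_eval_natCast (by omega), show c + a - 1 - j = c + (a - 1 - j) by omega]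
  exact_mod_cast key

theorem det_binomialColumnPoly_eval_add (a b c : ℕ) :
    (Matrix.of fun m k : Fin a => (binomialColumnPoly a b c k).eval (((m : ℕ) : ℚ) + c)).det =
      ∏ k : Fin a, (((b + c + k).descFactorial k * (a - 1 - k)! : ℕ) : ℚ) := by
  have hentry (m k : Fin a) : (binomialColumnPoly a b c k).eval (((m : ℕ) : ℚ) + c) =
      (((b + c + m).descFactorial k * (a - 1 - m).descFactorial (a - 1 - k) : ℕ) : ℚ) := by
    rw [show ((m : ℕ) : ℚ) + c = ((c + m : ℕ) : ℚ) by push_cast; ring,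
      binomialColumnPoly_eval_natCast (by omega), show b + (c + m) = b + c + m by omega,
      show c + a - 1 - (c + m) = a - 1 - m by omega]
  rw [Matrix.det_of_isUpperTriangular]
  · simp only [Matrix.of_apply, hentry, descFactorial_self]
  · intro m k (hkm : k < m)
    rw [Matrix.of_apply, hentry, (descFactorial_eq_zero_iff_lt (n := a - 1 - m)).mpr (by omega)]
    simp

theorem prod_fin_factorial_mul_factorial_reflect (a b c : ℕ) :
    ∏ j : Fin a, ((b + j)! * (c + (a - 1 - j))!) = ∏ n ∈ range a, ((b + n)! * (c + n)!) := by
  rw [Fin.prod_univ_eq_prod_range (fun j => (b + j)! * (c + (a - 1 - j))!), prod_mul_distrib,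
    prod_mul_distrib, prod_range_reflect (fun n => (c + n)!)]

theorem factorial_pow_mul_prod_descFactorial (a d : ℕ) :
    d ! ^ a * ∏ k : Fin a, ((d + k).descFactorial k * (a - 1 - k)!) =
      ∏ n ∈ range a, (n ! * (d + n)!) := by
  rw [Fin.prod_univ_eq_prod_range (fun k => (d + k).descFactorial k * (a - 1 - k)!),
    prod_mul_distrib, prod_range_reflect (fun n => n !), ← card_range a, ← prod_const,
    card_range, ← mul_assoc, ← prod_mul_distrib, mul_comm, ← prod_mul_distrib]
  refine prod_congr rfl fun n _ => ?_
  rw [← factorial_mul_descFactorial (Nat.le_add_left n d), Nat.add_sub_cancel]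

theorem binomial_determinant_general (a b c : ℕ) :
    Matrix.det (Matrix.of fun j k : Fin a =>
        (chooseZ (b + c) ((c : ℤ) + (k : ℤ) - (j : ℤ)) : ℚ))
      = ∏ n ∈ Finset.range a,
          ((Nat.factorial n : ℚ) * (Nat.factorial (b + c + n) : ℚ)) /
            ((Nat.factorial (b + n) : ℚ) * (Nat.factorial (c + n) : ℚ)) := by
  set M := Matrix.of fun j k : Fin a => (chooseZ (b + c) ((c : ℤ) + (k : ℤ) - (j : ℤ)) : ℚ)
  set A := Matrix.of fun j k : Fin a => (binomialColumnPoly a b c k).eval ((j : ℕ) : ℚ)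
  have hrows :
      Matrix.of (fun j k : Fin a => (((b + j)! * (c + (a - 1 - j))! : ℕ) : ℚ) * M j k) =
        ((b + c)! : ℚ) • A := by
    ext j k
    exact factorial_mul_factorial_mul_chooseZ_eq_binomialColumnPoly_eval j.isLt k.isLt
  have hdet : (∏ j : Fin a, (((b + j)! * (c + (a - 1 - j))! : ℕ) : ℚ)) * M.det =
      ((b + c)! : ℚ) ^ a *
        ∏ k : Fin a, (((b + c + k).descFactorial k * (a - 1 - k)! : ℕ) : ℚ) := by
    rw [← Matrix.det_mul_column, hrows, Matrix.det_smul, Fintype.card_fin,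
      ← det_binomialColumnPoly_eval_add,
      Matrix.det_of_eval_add _ _ _ fun k => binomialColumnPoly_natDegree_lt k.isLt]
  rw [← Nat.cast_prod, prod_fin_factorial_mul_factorial_reflect, ← Nat.cast_prod,
    ← Nat.cast_pow, ← Nat.cast_mul, factorial_pow_mul_prod_descFactorial] at hdet
  rw [prod_div_distrib, eq_div_iff (by positivity), mul_comm]
  exact_mod_cast hdet

/-- The binomial determinant evaluation:
`det(C(b+c, c+k-j))_{j,k=0}^{a-1} = ∏_{n=0}^{a-1} n!(b+c+n)!/((b+n)!(c+n)!)`. -/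
theorem binomial_determinant (a b c : ℕ) (ha : 0 < a) (hb : 0 < b) (hc : 0 < c) :
    Matrix.det (Matrix.of fun j k : Fin a =>
        (chooseZ (b + c) ((c : ℤ) + (k : ℤ) - (j : ℤ)) : ℚ))
      = ∏ n ∈ Finset.range a,
          ((Nat.factorial n : ℚ) * (Nat.factorial (b + c + n) : ℚ)) /
            ((Nat.factorial (b + n) : ℚ) * (Nat.factorial (c + n) : ℚ)) :=
  binomial_determinant_general a b c
end
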